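/- arXiv:2501.10412 — 2 statements merged into one kernel-verified Lean document; each statement's English description precedes it below -/
import Mathlib

section
/- Let m ≥ 1 be a natural number, s a natural number, 0 ≤ α ≤ 1, η > 0, γ > 0, and z ∈ [0,1]. Then for every natural number i, ℜ_{m,η,γ}^{(α,s)}(e_i; z) = (Γ(η+1)/(m+1)^i) · ∑_{n=0}^{i} C(i,n) · m^n · L_m^{(α,s)}(e_n; z) · Γ(γ(i−n)+1)/Γ(η+γ(i−n)+1), where e_i(t) = t^i and C(i,n) is the binomial coefficient. -/
open Real MeasureTheory Finset Set

/-- Generalized blending Bernstein basis functions `q_{m,j}^{(α,s)}(z)`. -/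
noncomputable def qbasis (m s : ℕ) (α : ℝ) (z : ℝ) (j : ℕ) : ℝ :=
  if j < s then
    (m.choose j : ℝ) * z ^ j * (1 - z) ^ (m - j)
  else
    (1 - α) * ((m - s).choose (j - s) : ℝ) * z ^ (j - s + 1) * (1 - z) ^ (m - j)
      + (1 - α) * ((m - s).choose j : ℝ) * z ^ j * (1 - z) ^ (m - s - j + 1)
      + α * (m.choose j : ℝ) * z ^ j * (1 - z) ^ (m - j)

/-- Generalized blending Bernstein operator `L_m^{(α,s)}(φ; z)`. -/
noncomputable def Lop (m s : ℕ) (α : ℝ) (φ : ℝ → ℝ) (z : ℝ) : ℝ :=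
  ∑ j ∈ Finset.range (m + 1), φ ((j : ℝ) / m) * qbasis m s α z j

/-- Riemann–Liouville type fractional generalized Bernstein–Kantorovich operator. -/
noncomputable def Rop (m s : ℕ) (α η γ : ℝ) (φ : ℝ → ℝ) (z : ℝ) : ℝ :=
  Real.Gamma (η + 1) *
    ∑ j ∈ Finset.range (m + 1), qbasis m s α z j *
      ∫ t in (0:ℝ)..1, ((1 - t) ^ (η - 1) / Real.Gamma η) * φ (((j : ℝ) + t ^ γ) / (m + 1))


lemma betaInt (b η : ℝ) (hb : 0 ≤ b) (hη : 0 < η) :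
    IntervalIntegrable (fun t : ℝ => t ^ b * (1 - t) ^ (η - 1)) volume 0 1 := by
  have h1 : IntervalIntegrable (fun x : ℝ => x ^ (η - 1)) volume 0 1 :=
    intervalIntegral.intervalIntegrable_rpow' (by linarith)
  have h2 := h1.comp_sub_left 1
  norm_num at h2
  have hcont : ContinuousOn (fun t : ℝ => t ^ b) (Set.uIcc (0:ℝ) 1) := fun x _ =>
    (Real.continuousAt_rpow_const x b (Or.inr hb)).continuousWithinAt
  exact h2.symm.continuousOn_mul hcont

lemma betaVal (b η : ℝ) (hb : 0 ≤ b) (hη : 0 < η) :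
    ∫ t in (0:ℝ)..1, t ^ b * (1 - t) ^ (η - 1)
      = Real.Gamma (b + 1) * Real.Gamma η / Real.Gamma (η + b + 1) := by
  have hbp : (0:ℝ) < b + 1 := by linarith
  have key := Complex.Gamma_mul_Gamma_eq_betaIntegral (s := ((b:ℂ) + 1)) (t := (η : ℂ))
    (by simpa using hbp) (by simpa using hη)
  have hbeta : Complex.betaIntegral ((b:ℂ) + 1) (η:ℂ)
      = ((∫ t in (0:ℝ)..1, t ^ b * (1 - t) ^ (η - 1) : ℝ) : ℂ) := by
    rw [Complex.betaIntegral, ← intervalIntegral.integral_ofReal]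
    apply intervalIntegral.integral_congr
    intro x hx
    rw [Set.uIcc_of_le (by norm_num : (0:ℝ) ≤ 1)] at hx
    have h1 : ((b:ℂ) + 1) - 1 = ((b : ℝ) : ℂ) := by push_cast; ring
    have h2 : (1 : ℂ) - (x:ℂ) = (((1 - x : ℝ)) : ℂ) := by push_cast; ring
    have h3 : (η:ℂ) - 1 = (((η - 1 : ℝ)) : ℂ) := by push_cast; ring
    simp only [h1, h2, h3, ← Complex.ofReal_cpow hx.1,
      ← Complex.ofReal_cpow (by linarith [hx.2] : (0:ℝ) ≤ 1 - x)]
    push_cast; ring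
  rw [hbeta] at key
  have hcast : ((b:ℂ) + 1) + (η:ℂ) = (((η + b + 1 : ℝ)) : ℂ) := by push_cast; ring
  rw [hcast, Complex.Gamma_ofReal] at key
  have h1 : Complex.Gamma ((b:ℂ) + 1) = ((Real.Gamma (b+1) : ℝ) : ℂ) := by
    rw [show ((b:ℂ) + 1) = (((b + 1 : ℝ)) : ℂ) by push_cast; ring, Complex.Gamma_ofReal]
  rw [h1, Complex.Gamma_ofReal, ← Complex.ofReal_mul, ← Complex.ofReal_mul] at key
  have := Complex.ofReal_injective key
  have hG : Real.Gamma (η + b + 1) ≠ 0 := (Real.Gamma_pos_of_pos (by linarith)).ne'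
  field_simp
  linarith [this]

lemma keyInt (m : ℕ) (η γ : ℝ) (hη : 0 < η) (hγ : 0 < γ) (i j : ℕ) :
    (∫ t in (0:ℝ)..1, ((1 - t) ^ (η - 1) / Real.Gamma η) * (((j:ℝ) + t ^ γ) / ((m:ℝ) + 1)) ^ i)
      = ∑ n ∈ Finset.range (i + 1), (i.choose n : ℝ) * (j:ℝ) ^ n / ((m:ℝ) + 1) ^ i *
          (Real.Gamma (γ * ((i - n : ℕ) : ℝ) + 1) / Real.Gamma (η + γ * ((i - n : ℕ) : ℝ) + 1)) := by
  have hΓη : Real.Gamma η ≠ 0 := (Real.Gamma_pos_of_pos hη).ne'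
  have hcongr : Set.EqOn
      (fun t : ℝ => ((1 - t) ^ (η - 1) / Real.Gamma η) * (((j:ℝ) + t ^ γ) / ((m:ℝ) + 1)) ^ i)
      (fun t : ℝ => ∑ n ∈ Finset.range (i + 1),
        ((i.choose n : ℝ) * (j:ℝ) ^ n / (Real.Gamma η * ((m:ℝ) + 1) ^ i)) *
          (t ^ (γ * ((i - n : ℕ) : ℝ)) * (1 - t) ^ (η - 1)))
      (Set.uIcc (0:ℝ) 1) := by
    intro x hx
    rw [Set.uIcc_of_le (by norm_num : (0:ℝ) ≤ 1)] at hx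
    beta_reduce
    rw [div_pow, add_pow, Finset.sum_div]
    rw [Finset.mul_sum]
    refine Finset.sum_congr rfl fun n hn => ?_
    rw [← Real.rpow_natCast (x ^ γ) (i - n), ← Real.rpow_mul hx.1]
    ring
  rw [intervalIntegral.integral_congr hcongr,
    intervalIntegral.integral_finset_sum (fun n _ =>
      (betaInt (γ * ((i - n : ℕ) : ℝ)) η (by positivity) hη).const_mul _)]
  refine Finset.sum_congr rfl fun n hn => ?_
  rw [intervalIntegral.integral_const_mul, betaVal _ _ (by positivity) hη]
  have hG : Real.Gamma (η + γ * ((i - n : ℕ) : ℝ) + 1) ≠ 0 :=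
    (Real.Gamma_pos_of_pos (by positivity)).ne'
  have h1 : ((m:ℝ) + 1) ^ i ≠ 0 := by positivity
  rw [show η + γ * ((i - n : ℕ) : ℝ) + 1 = η + (γ * ((i - n : ℕ) : ℝ) + 1) by ring] at hG ⊢
  field_simp

theorem stmt1 (m s : ℕ) (hm : 1 ≤ m) (α η γ : ℝ) (hα0 : 0 ≤ α) (hα1 : α ≤ 1)
    (hη : 0 < η) (hγ : 0 < γ) (z : ℝ) (hz : z ∈ Set.Icc (0:ℝ) 1) (i : ℕ) :
    Rop m s α η γ (fun t => t ^ i) z =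
      Real.Gamma (η + 1) / ((m : ℝ) + 1) ^ i *
        ∑ n ∈ Finset.range (i + 1),
          (i.choose n : ℝ) * (m : ℝ) ^ n * Lop m s α (fun t => t ^ n) z *
            (Real.Gamma (γ * ((i - n : ℕ) : ℝ) + 1) /
              Real.Gamma (η + γ * ((i - n : ℕ) : ℝ) + 1)) := by
  have hm0 : (m:ℝ) ≠ 0 := by positivity
  rw [Rop]
  simp only [keyInt m η γ hη hγ i, Lop, Finset.mul_sum, Finset.sum_mul]
  rw [Finset.sum_comm]
  refine Finset.sum_congr rfl fun n hn => Finset.sum_congr rfl fun j hj => ?_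
  have hjm : ((j:ℝ) / (m:ℝ)) ^ n = (j:ℝ) ^ n / (m:ℝ) ^ n := div_pow _ _ _
  have hmn : ((m:ℝ)) ^ n ≠ 0 := by positivity
  have hmi : ((m:ℝ) + 1) ^ i ≠ 0 := by positivity
  field_simp [hjm]
  rw [hjm, mul_assoc _ ((m:ℝ)^n), mul_div_assoc', mul_div_cancel_left₀ _ hmn]
end

section
/- Let s be a natural number, 0 ≤ α ≤ 1, η > 0, γ > 0, and let φ : [0,1] → ℝ be continuous. Then the operators ℜ_{m,η,γ}^{(α,s)}(φ; ·) converge uniformly to φ on [0,1]: for every ε > 0 there exists N ≥ max(s,1) such that for all m ≥ N and all z ∈ [0,1], |ℜ_{m,η,γ}^{(α,s)}(φ; z) − φ(z)| < ε. -/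
open Real MeasureTheory Finset Set


noncomputable def bb (n k : ℕ) (z : ℝ) : ℝ := (n.choose k : ℝ) * z^k * (1-z)^(n-k)

lemma bb_nonneg {n k : ℕ} {z : ℝ} (h0 : 0 ≤ z) (h1 : z ≤ 1) : 0 ≤ bb n k z := by
  unfold bb
  have : (0:ℝ) ≤ 1 - z := by linarith
  positivity

lemma bb_sum (n : ℕ) (z : ℝ) : ∑ k ∈ range (n+1), bb n k z = 1 := by
  have h := bernsteinPolynomial.sum ℝ n
  have := congrArg (Polynomial.eval z) h
  simpa [bb, bernsteinPolynomial, Polynomial.eval_finset_sum, mul_comm, mul_assoc, mul_left_comm] using this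

lemma bb_var (n : ℕ) (z : ℝ) :
    ∑ k ∈ range (n+1), bb n k z * ((k:ℝ) - n*z)^2 = n*z*(1-z) := by
  have h := bernsteinPolynomial.variance (R := ℝ) n
  have h2 := congrArg (Polynomial.eval z) h
  simp [bernsteinPolynomial, Polynomial.eval_finset_sum] at h2
  calc ∑ k ∈ range (n+1), bb n k z * ((k:ℝ) - n*z)^2
      = ∑ k ∈ range (n+1), ((n:ℝ)*z - k)^2 * ((n.choose k:ℝ) * z^k * (1-z)^(n-k)) := by
        apply Finset.sum_congr rfl; intro k _; unfold bb; ring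
    _ = n*z*(1-z) := by rw [← h2]

lemma key_pow {N k : ℕ} {z : ℝ} (h0 : 0 ≤ z) (h1 : z ≤ 1) :
    ((N:ℝ)*z)^k * (1-z)^N ≤ k.factorial := by
  set x : ℝ := N*z with hx
  have hx0 : 0 ≤ x := by positivity
  have h1z : (1-z)^N ≤ Real.exp (-x) := by
    have h2 : (1-z) ≤ Real.exp (-z) := by
      have := Real.add_one_le_exp (-z); linarith
    calc (1-z)^N ≤ (Real.exp (-z))^N := by
          apply pow_le_pow_left₀ (by linarith) h2
      _ = Real.exp (-x) := by
          rw [← Real.exp_nat_mul]; ring_nf; rw [hx]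
  have hxk : x^k ≤ k.factorial * Real.exp x := by
    have hs := Real.sum_le_exp_of_nonneg hx0 (k+1)
    have hsingle : x^k / k.factorial ≤ ∑ i ∈ range (k+1), x^i / i.factorial :=
      Finset.single_le_sum (f := fun i => x^i / (i.factorial : ℝ))
        (fun i _ => div_nonneg (pow_nonneg hx0 _) (by positivity)) (self_mem_range_succ k)
    have hfac : (0:ℝ) < k.factorial := by positivity
    rw [div_le_iff₀ hfac] at hsingle
    calc x^k ≤ (∑ i ∈ range (k+1), x^i / i.factorial) * k.factorial := hsingle
      _ ≤ Real.exp x * k.factorial := by gcongr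
      _ = k.factorial * Real.exp x := by ring
  calc x^k * (1-z)^N ≤ x^k * Real.exp (-x) := by
        apply mul_le_mul_of_nonneg_left h1z (by positivity)
    _ ≤ (k.factorial * Real.exp x) * Real.exp (-x) := by
        apply mul_le_mul_of_nonneg_right hxk (by positivity)
    _ = k.factorial := by rw [mul_assoc, ← Real.exp_add]; simp

lemma one_sub_pow_le' (k : ℕ) {z : ℝ} (h0 : 0 ≤ z) (h1 : z ≤ 1) :
    1 - (1-z)^k ≤ k*z := by
  have := one_add_mul_le_pow (a := -z) (by linarith) k
  have h2 : 1 + k*(-z) ≤ (1-z)^k := by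
    calc 1 + k*(-z) ≤ (1 + -z)^k := this
      _ = (1-z)^k := by ring_nf
  linarith

lemma chd (s : ℕ) : ∀ m i : ℕ, m.choose (i+1) ≤ (m - s).choose (i+1) + s * m ^ i := by
  induction s with
  | zero => intro m i; simp
  | succ s ih =>
    intro m i
    cases m with
    | zero => simp
    | succ m' =>
      have pascal : (m'+1).choose (i+1) = m'.choose i + m'.choose (i+1) :=
        Nat.choose_succ_succ m' i
      have h1 : m'.choose i ≤ m' ^ i := Nat.choose_le_pow m' i
      have h2 := ih m' i
      have h3 : m' ^ i ≤ (m'+1) ^ i := Nat.pow_le_pow_left (Nat.le_succ m') i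
      have h4 : m' + 1 - (s + 1) = m' - s := by omega
      calc (m'+1).choose (i+1) = m'.choose i + m'.choose (i+1) := pascal
        _ ≤ m' ^ i + ((m' - s).choose (i+1) + s * m' ^ i) := by
            exact Nat.add_le_add h1 h2
        _ = (m' - s).choose (i+1) + (s+1) * m' ^ i := by ring
        _ ≤ (m'+1 - (s+1)).choose (i+1) + (s+1) * (m'+1) ^ i := by
            rw [h4]; exact Nat.add_le_add_left (Nat.mul_le_mul_left _ h3) _


lemma weight_intble {η : ℝ} (hη : 0 < η) :
    IntervalIntegrable (fun t => (1-t : ℝ)^(η-1)) MeasureTheory.volume 0 1 := by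
  have h : IntervalIntegrable (fun t : ℝ => t^(η-1)) MeasureTheory.volume 0 1 :=
    intervalIntegral.intervalIntegrable_rpow' (by linarith)
  have := (h.comp_sub_left 1).symm
  simpa using this

lemma weight_integral {η : ℝ} (hη : 0 < η) :
    ∫ t in (0:ℝ)..1, (1-t)^(η-1) = 1/η := by
  have h : ∫ t in (0:ℝ)..1, ((fun u : ℝ => u^(η-1)) (1 - t)) = ∫ u in (1-(1:ℝ))..(1-(0:ℝ)), (fun u : ℝ => u^(η-1)) u :=
    intervalIntegral.integral_comp_sub_left (a := 0) (b := 1) (fun u : ℝ => u^(η-1)) 1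
  simp only [sub_self, sub_zero] at h
  rw [show (fun t : ℝ => (1-t)^(η-1)) = (fun t : ℝ => ((fun u : ℝ => u^(η-1)) (1 - t))) from rfl, h,
    integral_rpow (Or.inl (by linarith))]
  rw [Real.one_rpow, Real.zero_rpow (by linarith)]
  ring_nf


lemma T1_sum (s m : ℕ) (hsm : s ≤ m) (z : ℝ) :
    ∑ j ∈ Finset.Ico s (m+1), ((m-s).choose (j-s) : ℝ) * z^(j-s+1) * (1-z)^(m-j) = z := by
  rw [Finset.sum_Ico_eq_sum_range]
  have hms : m + 1 - s = (m - s) + 1 := by omega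
  rw [hms]
  have hcg : ∀ k ∈ range ((m-s)+1),
      ((m-s).choose (s+k-s) : ℝ) * z^(s+k-s+1) * (1-z)^(m-(s+k)) = z * bb (m-s) k z := by
    intro k _
    have e1 : s + k - s = k := by omega
    have e2 : m - (s+k) = (m-s) - k := by omega
    rw [e1, e2]; unfold bb; ring
  rw [Finset.sum_congr rfl hcg, ← Finset.mul_sum, bb_sum, mul_one]

lemma T2_sum (s m : ℕ) (hsm : s ≤ m) (z : ℝ) :
    ∑ j ∈ range (m+1), ((m-s).choose j : ℝ) * z^j * (1-z)^(m-s-j+1) = 1 - z := by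
  rw [← Finset.sum_subset (Finset.range_subset_range.mpr (by omega : m - s + 1 ≤ m + 1))]
  · have hcg : ∀ j ∈ range ((m-s)+1),
        ((m-s).choose j : ℝ) * z^j * (1-z)^(m-s-j+1) = (1-z) * bb (m-s) j z := by
      intro j _
      unfold bb; rw [pow_succ]; ring
    rw [Finset.sum_congr rfl hcg, ← Finset.mul_sum, bb_sum, mul_one]
  · intro j hj hj2
    have h : m - s < j := by
      simp only [Finset.mem_range] at hj hj2; omega
    simp [Nat.choose_eq_zero_of_lt h]

lemma sum_split (m s : ℕ) (hsm : s ≤ m) (f : ℕ → ℝ) :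
    ∑ j ∈ range (m+1), f j = ∑ j ∈ range s, f j + ∑ j ∈ Finset.Ico s (m+1), f j := by
  simp only [Finset.range_eq_Ico]
  exact (Finset.sum_Ico_consecutive f (by omega : 0 ≤ s) (by omega : s ≤ m+1)).symm

lemma qbasis_nonneg {m s : ℕ} {α z : ℝ} (hα0 : 0 ≤ α) (hα1 : α ≤ 1)
    (h0 : 0 ≤ z) (h1 : z ≤ 1) (j : ℕ) : 0 ≤ qbasis m s α z j := by
  have h1z : (0:ℝ) ≤ 1 - z := by linarith
  have h1a : (0:ℝ) ≤ 1 - α := by linarith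
  unfold qbasis
  split
  · positivity
  · positivity

lemma q_sum_eq (s m : ℕ) (hsm : s ≤ m) (α z : ℝ) :
    ∑ j ∈ range (m+1), qbasis m s α z j
      = 1 + (1-α) * ∑ j ∈ range s,
          (bb m j z - ((m-s).choose j : ℝ) * z^j * (1-z)^(m-s-j+1)) := by
  rw [sum_split m s hsm]
  have hA : ∀ j ∈ range s, qbasis m s α z j = bb m j z := by
    intro j hj
    rw [Finset.mem_range] at hj
    unfold qbasis bb; rw [if_pos hj]
  have hB : ∀ j ∈ Finset.Ico s (m+1), qbasis m s α z j
      = (1-α) * (((m-s).choose (j-s) : ℝ) * z^(j-s+1) * (1-z)^(m-j))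
        + (1-α) * (((m-s).choose j : ℝ) * z^j * (1-z)^(m-s-j+1))
        + α * bb m j z := by
    intro j hj
    rw [Finset.mem_Ico] at hj
    unfold qbasis bb; rw [if_neg (by omega)]; ring
  rw [Finset.sum_congr rfl hA, Finset.sum_congr rfl hB]
  rw [Finset.sum_add_distrib, Finset.sum_add_distrib, ← Finset.mul_sum, ← Finset.mul_sum,
    ← Finset.mul_sum, T1_sum s m hsm]
  have hT2 : ∑ j ∈ Finset.Ico s (m+1), ((m-s).choose j : ℝ) * z^j * (1-z)^(m-s-j+1)
      = (1 - z) - ∑ j ∈ range s, ((m-s).choose j : ℝ) * z^j * (1-z)^(m-s-j+1) := by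
    have := sum_split m s hsm (fun j => ((m-s).choose j : ℝ) * z^j * (1-z)^(m-s-j+1))
    rw [T2_sum s m hsm] at this; linarith
  have hbbIco : ∑ j ∈ Finset.Ico s (m+1), bb m j z = 1 - ∑ j ∈ range s, bb m j z := by
    have := sum_split m s hsm (fun j => bb m j z)
    rw [bb_sum] at this; linarith
  rw [hT2, hbbIco, Finset.sum_sub_distrib]
  ring

lemma moment_bound (n : ℕ) {z D : ℝ} (h0 : 0 ≤ z) (h1 : z ≤ 1) (d : ℝ) (hd : |d| ≤ D) :
    ∑ k ∈ range (n+1), bb n k z * ((k:ℝ) - n*z + d)^2 ≤ n/2 + 2*D^2 := by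
  have hda := abs_le.mp hd
  have step : ∀ k ∈ range (n+1),
      bb n k z * ((k:ℝ) - n*z + d)^2
        ≤ bb n k z * (2*((k:ℝ)-n*z)^2 + 2*D^2) := by
    intro k _
    apply mul_le_mul_of_nonneg_left _ (bb_nonneg h0 h1)
    nlinarith [sq_nonneg ((k:ℝ)-n*z-d), sq_nonneg ((k:ℝ)-n*z+d)]
  calc ∑ k ∈ range (n+1), bb n k z * ((k:ℝ) - n*z + d)^2
      ≤ ∑ k ∈ range (n+1), bb n k z * (2*((k:ℝ)-n*z)^2 + 2*D^2) := Finset.sum_le_sum step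
    _ = 2 * ∑ k ∈ range (n+1), bb n k z * ((k:ℝ)-n*z)^2
        + 2*D^2 * ∑ k ∈ range (n+1), bb n k z := by
        rw [Finset.mul_sum, Finset.mul_sum, ← Finset.sum_add_distrib]
        apply Finset.sum_congr rfl; intro k _; ring
    _ = 2 * (n*z*(1-z)) + 2*D^2 := by rw [bb_var, bb_sum, mul_one]
    _ ≤ n/2 + 2*D^2 := by nlinarith [Nat.cast_nonneg (α := ℝ) n, sq_nonneg (1-2*z), mul_nonneg (Nat.cast_nonneg (α := ℝ) n) (sq_nonneg (1-2*z))]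

set_option maxHeartbeats 1000000 in
lemma q_moment (s m : ℕ) (hsm : s ≤ m) {α z : ℝ} (hα0 : 0 ≤ α) (hα1 : α ≤ 1)
    (h0 : 0 ≤ z) (h1 : z ≤ 1) :
    ∑ j ∈ range (m+1), qbasis m s α z j * ((j:ℝ) - ((m:ℝ)+1)*z)^2
      ≤ 2*(m:ℝ) + 6*((s:ℝ)+1)^2 := by
  have h1z : (0:ℝ) ≤ 1 - z := by linarith
  have hs0 : (0:ℝ) ≤ (s:ℝ) := Nat.cast_nonneg s
  have hcast : ((m-s:ℕ):ℝ) = (m:ℝ) - s := Nat.cast_sub hsm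
  set e : ℕ → ℝ := fun j => ((j:ℝ) - ((m:ℝ)+1)*z)^2 with he
  have he_nonneg : ∀ j, 0 ≤ e j := fun j => sq_nonneg _
  -- (1) full Bernstein moment
  have hP14 : ∑ j ∈ range (m+1), bb m j z * e j ≤ (m:ℝ)/2 + 2 := by
    have hb := moment_bound (D := 1) m h0 h1 (-z)
      (by rw [abs_le]; constructor <;> linarith)
    calc ∑ j ∈ range (m+1), bb m j z * e j
        = ∑ j ∈ range (m+1), bb m j z * ((j:ℝ) - m*z + (-z))^2 := by
          apply Finset.sum_congr rfl; intro j _; simp only [he]; ring_nf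
      _ ≤ (m:ℝ)/2 + 2*1^2 := hb
      _ = (m:ℝ)/2 + 2 := by norm_num
  -- (2) T1 moment
  have hP2 : ∑ j ∈ Finset.Ico s (m+1),
      ((((m-s).choose (j-s):ℝ) * z^(j-s+1) * (1-z)^(m-j)) * e j)
      ≤ (m:ℝ)/2 + 2*((s:ℝ)+1)^2 := by
    rw [Finset.sum_Ico_eq_sum_range]
    have hms : m + 1 - s = (m - s) + 1 := by omega
    rw [hms]
    have hcg : ∀ k ∈ range ((m-s)+1),
        ((((m-s).choose (s+k-s):ℝ) * z^(s+k-s+1) * (1-z)^(m-(s+k))) * e (s+k))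
          = z * (bb (m-s) k z * ((k:ℝ) - ((m-s:ℕ):ℝ)*z + ((s:ℝ) - ((s:ℝ)+1)*z))^2) := by
      intro k _
      have e1 : s + k - s = k := by omega
      have e2 : m - (s+k) = (m-s) - k := by omega
      rw [e1, e2]; simp only [he]; unfold bb
      rw [hcast]; push_cast; ring
    rw [Finset.sum_congr rfl hcg, ← Finset.mul_sum]
    have hde : |(s:ℝ) - ((s:ℝ)+1)*z| ≤ (s:ℝ)+1 := by
      rw [abs_le]; constructor <;> nlinarith
    have hb := moment_bound (m-s) h0 h1 ((s:ℝ) - ((s:ℝ)+1)*z) hde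
    have hsn : 0 ≤ ∑ k ∈ range ((m-s)+1),
        bb (m-s) k z * ((k:ℝ) - ((m-s:ℕ):ℝ)*z + ((s:ℝ) - ((s:ℝ)+1)*z))^2 :=
      Finset.sum_nonneg fun k _ => mul_nonneg (bb_nonneg h0 h1) (sq_nonneg _)
    calc z * ∑ k ∈ range ((m-s)+1),
          bb (m-s) k z * ((k:ℝ) - ((m-s:ℕ):ℝ)*z + ((s:ℝ) - ((s:ℝ)+1)*z))^2
        ≤ ∑ k ∈ range ((m-s)+1),
          bb (m-s) k z * ((k:ℝ) - ((m-s:ℕ):ℝ)*z + ((s:ℝ) - ((s:ℝ)+1)*z))^2 :=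
          mul_le_of_le_one_left hsn h1
      _ ≤ ((m-s:ℕ):ℝ)/2 + 2*((s:ℝ)+1)^2 := hb
      _ ≤ (m:ℝ)/2 + 2*((s:ℝ)+1)^2 := by rw [hcast]; linarith
  -- (3) T2 moment
  have hP3 : ∑ j ∈ Finset.Ico s (m+1),
      ((((m-s).choose j:ℝ) * z^j * (1-z)^(m-s-j+1)) * e j)
      ≤ (m:ℝ)/2 + 2*((s:ℝ)+1)^2 := by
    have hsub : ∑ j ∈ Finset.Ico s (m+1),
        ((((m-s).choose j:ℝ) * z^j * (1-z)^(m-s-j+1)) * e j)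
        ≤ ∑ j ∈ range (m+1),
        ((((m-s).choose j:ℝ) * z^j * (1-z)^(m-s-j+1)) * e j) := by
      apply Finset.sum_le_sum_of_subset_of_nonneg
      · intro x hx; rw [Finset.mem_Ico] at hx; rw [Finset.mem_range]; omega
      · intro j _ _
        exact mul_nonneg (by positivity) (he_nonneg j)
    have hshrink : ∑ j ∈ range (m+1),
        ((((m-s).choose j:ℝ) * z^j * (1-z)^(m-s-j+1)) * e j)
        = ∑ j ∈ range ((m-s)+1),
        ((((m-s).choose j:ℝ) * z^j * (1-z)^(m-s-j+1)) * e j) := by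
      symm
      apply Finset.sum_subset (Finset.range_subset_range.mpr (by omega))
      intro j hj hj2
      have h : m - s < j := by
        simp only [Finset.mem_range] at hj hj2; omega
      simp [Nat.choose_eq_zero_of_lt h]
    have hcg : ∀ j ∈ range ((m-s)+1),
        ((((m-s).choose j:ℝ) * z^j * (1-z)^(m-s-j+1)) * e j)
          = (1-z) * (bb (m-s) j z * ((j:ℝ) - ((m-s:ℕ):ℝ)*z + (-(((s:ℝ)+1)*z)))^2) := by
      intro j _
      simp only [he]; unfold bb; rw [pow_succ, hcast]; push_cast; ring
    have hde : |(-(((s:ℝ)+1)*z))| ≤ (s:ℝ)+1 := by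
      rw [abs_le]; constructor <;> nlinarith
    have hb := moment_bound (m-s) h0 h1 (-(((s:ℝ)+1)*z)) hde
    have hsn : 0 ≤ ∑ j ∈ range ((m-s)+1),
        bb (m-s) j z * ((j:ℝ) - ((m-s:ℕ):ℝ)*z + (-(((s:ℝ)+1)*z)))^2 :=
      Finset.sum_nonneg fun k _ => mul_nonneg (bb_nonneg h0 h1) (sq_nonneg _)
    calc ∑ j ∈ Finset.Ico s (m+1),
        ((((m-s).choose j:ℝ) * z^j * (1-z)^(m-s-j+1)) * e j)
        ≤ ∑ j ∈ range ((m-s)+1),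
          ((((m-s).choose j:ℝ) * z^j * (1-z)^(m-s-j+1)) * e j) := by
          rw [← hshrink]; exact hsub
      _ = (1-z) * ∑ j ∈ range ((m-s)+1),
          bb (m-s) j z * ((j:ℝ) - ((m-s:ℕ):ℝ)*z + (-(((s:ℝ)+1)*z)))^2 := by
          rw [Finset.sum_congr rfl hcg, ← Finset.mul_sum]
      _ ≤ ∑ j ∈ range ((m-s)+1),
          bb (m-s) j z * ((j:ℝ) - ((m-s:ℕ):ℝ)*z + (-(((s:ℝ)+1)*z)))^2 :=
          mul_le_of_le_one_left hsn (by linarith)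
      _ ≤ ((m-s:ℕ):ℝ)/2 + 2*((s:ℝ)+1)^2 := hb
      _ ≤ (m:ℝ)/2 + 2*((s:ℝ)+1)^2 := by rw [hcast]; linarith
  -- assemble
  rw [sum_split m s hsm]
  have hA : ∀ j ∈ range s, qbasis m s α z j * e j = bb m j z * e j := by
    intro j hj
    rw [Finset.mem_range] at hj
    unfold qbasis bb; rw [if_pos hj]
  have hB : ∀ j ∈ Finset.Ico s (m+1), qbasis m s α z j * e j
      = (1-α) * ((((m-s).choose (j-s):ℝ) * z^(j-s+1) * (1-z)^(m-j)) * e j)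
        + (1-α) * ((((m-s).choose j:ℝ) * z^j * (1-z)^(m-s-j+1)) * e j)
        + α * (bb m j z * e j) := by
    intro j hj
    rw [Finset.mem_Ico] at hj
    unfold qbasis bb; rw [if_neg (by omega)]; ring
  rw [Finset.sum_congr rfl hA, Finset.sum_congr rfl hB]
  rw [Finset.sum_add_distrib, Finset.sum_add_distrib, ← Finset.mul_sum, ← Finset.mul_sum,
    ← Finset.mul_sum]
  have hsplit_bb := sum_split m s hsm (fun j => bb m j z * e j)
  have hbb_s_nonneg : 0 ≤ ∑ j ∈ range s, bb m j z * e j :=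
    Finset.sum_nonneg fun j _ => mul_nonneg (bb_nonneg h0 h1) (he_nonneg j)
  have hbb_ico_nonneg : 0 ≤ ∑ j ∈ Finset.Ico s (m+1), bb m j z * e j :=
    Finset.sum_nonneg fun j _ => mul_nonneg (bb_nonneg h0 h1) (he_nonneg j)
  have hT1_nonneg : 0 ≤ ∑ j ∈ Finset.Ico s (m+1),
      ((((m-s).choose (j-s):ℝ) * z^(j-s+1) * (1-z)^(m-j)) * e j) :=
    Finset.sum_nonneg fun j _ => mul_nonneg (by positivity) (he_nonneg j)
  have hT2_nonneg : 0 ≤ ∑ j ∈ Finset.Ico s (m+1),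
      ((((m-s).choose j:ℝ) * z^j * (1-z)^(m-s-j+1)) * e j) :=
    Finset.sum_nonneg fun j _ => mul_nonneg (by positivity) (he_nonneg j)
  have hsq : (1:ℝ) ≤ ((s:ℝ)+1)^2 := by nlinarith
  have hm0 : (0:ℝ) ≤ (m:ℝ) := Nat.cast_nonneg m
  have g1 := mul_le_of_le_one_left hT1_nonneg (by linarith : 1-α ≤ 1)
  have g2 := mul_le_of_le_one_left hT2_nonneg (by linarith : 1-α ≤ 1)
  have g3 := mul_le_of_le_one_left hbb_ico_nonneg hα1
  linarith [hP14, hP2, hP3, hsplit_bb, hbb_s_nonneg, g1, g2, g3]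

lemma choose_diff_real (s m j : ℕ) :
    (m:ℝ) * ((m.choose j : ℝ) - ((m-s).choose j : ℝ)) ≤ (s:ℝ) * (m:ℝ)^j := by
  cases j with
  | zero => simp
  | succ i =>
    have h := chd s m i
    have hb : ((m.choose (i+1) : ℝ)) - ((m-s).choose (i+1) : ℝ) ≤ (s:ℝ) * (m:ℝ)^i := by
      have : (m.choose (i+1) : ℝ) ≤ ((m-s).choose (i+1) : ℝ) + (s:ℝ) * (m:ℝ)^i := by
        exact_mod_cast h
      linarith
    have hm0 : (0:ℝ) ≤ (m:ℝ) := Nat.cast_nonneg m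
    calc (m:ℝ) * ((m.choose (i+1) : ℝ) - ((m-s).choose (i+1) : ℝ))
        ≤ (m:ℝ) * ((s:ℝ) * (m:ℝ)^i) := by
          apply mul_le_mul_of_nonneg_left hb hm0
      _ = (s:ℝ) * (m:ℝ)^(i+1) := by ring

set_option maxHeartbeats 1000000 in
lemma diff_bound {s j m : ℕ} (hj : j < s) (hm : 4*s+4 ≤ m) {z : ℝ}
    (h0 : 0 ≤ z) (h1 : z ≤ 1) :
    |bb m j z - ((m-s).choose j : ℝ) * z^j * (1-z)^(m-s-j+1)| * m
      ≤ 2*(s:ℝ)*2^s*(s.factorial) := by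
  have h1z : (0:ℝ) ≤ 1 - z := by linarith
  set N := m - s + 1 - j with hN
  have e1 : m - j = N + (s-1) := by omega
  have e2 : m - s - j + 1 = N := by omega
  have hm2N : m ≤ 2*N := by omega
  set a : ℝ := (m.choose j : ℝ) with ha
  set b : ℝ := ((m-s).choose j : ℝ) with hb
  set u : ℝ := (1-z)^(s-1) with hu
  set P : ℝ := z^j * (1-z)^N with hP
  have hP0 : 0 ≤ P := by positivity
  have hdiff : bb m j z - ((m-s).choose j : ℝ) * z^j * (1-z)^(m-s-j+1)
      = P * (a*u - b) := by
    unfold bb; rw [e1, e2, pow_add, hP, ha, hb, hu]; ring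
  have hba : b ≤ a := by
    rw [ha, hb]; exact_mod_cast Nat.choose_le_choose j (Nat.sub_le m s)
  have hu0 : 0 ≤ u := by positivity
  have hu1 : u ≤ 1 := pow_le_one₀ h1z (by linarith)
  have ha0 : (0:ℝ) ≤ a := Nat.cast_nonneg _
  have habs : |a*u - b| ≤ a*(1-u) + (a - b) := by
    rw [abs_le]; constructor
    · nlinarith
    · nlinarith
  have hm0 : (0:ℝ) ≤ (m:ℝ) := Nat.cast_nonneg m
  have hmN : (m:ℝ) ≤ 2*(N:ℝ) := by exact_mod_cast hm2N
  have hapow : a ≤ (m:ℝ)^j := by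
    rw [ha]; exact_mod_cast Nat.choose_le_pow m j
  have hsz : 1 - u ≤ (s:ℝ)*z := by
    have h := one_sub_pow_le' (s-1) h0 h1
    have hc : ((s-1:ℕ):ℝ) ≤ (s:ℝ) := by exact_mod_cast Nat.sub_le s 1
    rw [hu]
    calc 1 - (1-z)^(s-1) ≤ ((s-1:ℕ):ℝ)*z := h
      _ ≤ (s:ℝ)*z := by apply mul_le_mul_of_nonneg_right hc h0
  -- term 1 bound
  have ht1 : (m:ℝ) * (a*(1-u)) * P ≤ (s:ℝ)*2^(j+1)*((j+1).factorial : ℝ) := by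
    have q1 : a*(1-u) ≤ (m:ℝ)^j*((s:ℝ)*z) :=
      mul_le_mul hapow hsz (by linarith) (by positivity)
    have step1 : (m:ℝ) * (a*(1-u)) * P ≤ (s:ℝ) * ((m:ℝ)^(j+1) * (z^(j+1) * (1-z)^N)) := by
      have : (m:ℝ) * (a*(1-u)) * P ≤ (m:ℝ) * ((m:ℝ)^j*((s:ℝ)*z)) * P := by
        have := mul_le_mul_of_nonneg_left q1 hm0
        apply mul_le_mul_of_nonneg_right this hP0
      calc (m:ℝ) * (a*(1-u)) * P ≤ (m:ℝ) * ((m:ℝ)^j*((s:ℝ)*z)) * P := this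
        _ = (s:ℝ) * ((m:ℝ)^(j+1) * (z^(j+1) * (1-z)^N)) := by rw [hP]; ring
    have step2 : (m:ℝ)^(j+1) * (z^(j+1) * (1-z)^N) ≤ (2:ℝ)^(j+1) * (((N:ℝ)*z)^(j+1) * (1-z)^N) := by
      have hp : (m:ℝ)^(j+1) ≤ (2*(N:ℝ))^(j+1) := pow_le_pow_left₀ hm0 hmN _
      have : (m:ℝ)^(j+1) * (z^(j+1) * (1-z)^N) ≤ (2*(N:ℝ))^(j+1) * (z^(j+1) * (1-z)^N) :=
        mul_le_mul_of_nonneg_right hp (by positivity)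
      calc (m:ℝ)^(j+1) * (z^(j+1) * (1-z)^N) ≤ (2*(N:ℝ))^(j+1) * (z^(j+1) * (1-z)^N) := this
        _ = (2:ℝ)^(j+1) * (((N:ℝ)*z)^(j+1) * (1-z)^N) := by rw [mul_pow, mul_pow]; ring
    have step3 : ((N:ℝ)*z)^(j+1) * (1-z)^N ≤ ((j+1).factorial : ℝ) := key_pow h0 h1
    calc (m:ℝ) * (a*(1-u)) * P ≤ (s:ℝ) * ((m:ℝ)^(j+1) * (z^(j+1) * (1-z)^N)) := step1
      _ ≤ (s:ℝ) * ((2:ℝ)^(j+1) * (((N:ℝ)*z)^(j+1) * (1-z)^N)) :=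
          mul_le_mul_of_nonneg_left step2 (Nat.cast_nonneg s)
      _ ≤ (s:ℝ) * ((2:ℝ)^(j+1) * ((j+1).factorial : ℝ)) :=
          mul_le_mul_of_nonneg_left (mul_le_mul_of_nonneg_left step3 (by positivity)) (Nat.cast_nonneg s)
      _ = (s:ℝ)*2^(j+1)*((j+1).factorial : ℝ) := by ring
  -- term 2 bound
  have ht2 : ((m:ℝ) * (a - b)) * P ≤ (s:ℝ)*2^j*(j.factorial : ℝ) := by
    have q2 : (m:ℝ) * (a - b) ≤ (s:ℝ) * (m:ℝ)^j := choose_diff_real s m j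
    have step1 : ((m:ℝ) * (a - b)) * P ≤ ((s:ℝ) * (m:ℝ)^j) * P :=
      mul_le_mul_of_nonneg_right q2 hP0
    have hp : (m:ℝ)^j ≤ (2*(N:ℝ))^j := pow_le_pow_left₀ hm0 hmN _
    have step2 : ((s:ℝ) * (m:ℝ)^j) * P ≤ (s:ℝ) * (2:ℝ)^j * (((N:ℝ)*z)^j * (1-z)^N) := by
      calc ((s:ℝ) * (m:ℝ)^j) * P ≤ ((s:ℝ) * (2*(N:ℝ))^j) * P := by
            apply mul_le_mul_of_nonneg_right _ hP0
            apply mul_le_mul_of_nonneg_left hp (Nat.cast_nonneg s)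
        _ = (s:ℝ) * (2:ℝ)^j * (((N:ℝ)*z)^j * (1-z)^N) := by rw [hP, mul_pow, mul_pow]; ring
    have step3 : ((N:ℝ)*z)^j * (1-z)^N ≤ (j.factorial : ℝ) := key_pow h0 h1
    calc ((m:ℝ) * (a - b)) * P ≤ ((s:ℝ) * (m:ℝ)^j) * P := step1
      _ ≤ (s:ℝ) * (2:ℝ)^j * (((N:ℝ)*z)^j * (1-z)^N) := step2
      _ ≤ (s:ℝ) * (2:ℝ)^j * (j.factorial : ℝ) := by
          apply mul_le_mul_of_nonneg_left step3 (by positivity)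
      _ = (s:ℝ)*2^j*(j.factorial : ℝ) := by ring
  -- combine
  have hcomb : |bb m j z - ((m-s).choose j : ℝ) * z^j * (1-z)^(m-s-j+1)| * m
      ≤ (s:ℝ)*2^(j+1)*((j+1).factorial : ℝ) + (s:ℝ)*2^j*(j.factorial : ℝ) := by
    rw [hdiff, abs_mul, abs_of_nonneg hP0]
    calc P * |a*u - b| * m ≤ P * (a*(1-u) + (a - b)) * m := by
          apply mul_le_mul_of_nonneg_right _ hm0
          apply mul_le_mul_of_nonneg_left habs hP0
      _ = (m:ℝ) * (a*(1-u)) * P + ((m:ℝ) * (a - b)) * P := by ring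
      _ ≤ (s:ℝ)*2^(j+1)*((j+1).factorial : ℝ) + (s:ℝ)*2^j*(j.factorial : ℝ) :=
          add_le_add ht1 ht2
  -- final numeric closure
  have hj1 : j + 1 ≤ s := hj
  have hfac1 : ((j+1).factorial : ℝ) ≤ (s.factorial : ℝ) := by
    exact_mod_cast Nat.factorial_le hj1
  have hfac2 : (j.factorial : ℝ) ≤ (s.factorial : ℝ) := by
    exact_mod_cast Nat.factorial_le (by omega : j ≤ s)
  have hpow1 : (2:ℝ)^(j+1) ≤ (2:ℝ)^s := by
    apply pow_le_pow_right₀ (by norm_num) hj1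
  have hpow2 : (2:ℝ)^j ≤ (2:ℝ)^s := by
    apply pow_le_pow_right₀ (by norm_num) (by omega : j ≤ s)
  have hs0 : (0:ℝ) ≤ (s:ℝ) := Nat.cast_nonneg s
  have hf0 : (0:ℝ) ≤ (s.factorial : ℝ) := Nat.cast_nonneg _
  have b1 : (s:ℝ)*2^(j+1)*((j+1).factorial : ℝ) ≤ (s:ℝ)*2^s*(s.factorial : ℝ) := by
    apply mul_le_mul _ hfac1 (Nat.cast_nonneg _) (by positivity)
    apply mul_le_mul_of_nonneg_left hpow1 hs0
  have b2 : (s:ℝ)*2^j*(j.factorial : ℝ) ≤ (s:ℝ)*2^s*(s.factorial : ℝ) := by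
    apply mul_le_mul _ hfac2 (Nat.cast_nonneg _) (by positivity)
    apply mul_le_mul_of_nonneg_left hpow2 hs0
  calc |bb m j z - ((m-s).choose j : ℝ) * z^j * (1-z)^(m-s-j+1)| * m
      ≤ (s:ℝ)*2^(j+1)*((j+1).factorial : ℝ) + (s:ℝ)*2^j*(j.factorial : ℝ) := hcomb
    _ ≤ (s:ℝ)*2^s*(s.factorial : ℝ) + (s:ℝ)*2^s*(s.factorial : ℝ) := add_le_add b1 b2
    _ = 2*(s:ℝ)*2^s*(s.factorial : ℝ) := by ring

lemma key_j {η γ : ℝ} (hη : 0 < η) (hγ : 0 < γ) (φ : ℝ → ℝ)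
    (hφ : ContinuousOn φ (Set.Icc (0:ℝ) 1)) {m j : ℕ} (hj : j ≤ m) {z : ℝ}
    (hz : z ∈ Set.Icc (0:ℝ) 1) {ε' A : ℝ} (hA : 0 ≤ A)
    (hK : ∀ x ∈ Set.Icc (0:ℝ) 1, |φ x - φ z| ≤ ε' + A*(x-z)^2) :
    |Real.Gamma (η+1) *
        (∫ t in (0:ℝ)..1, ((1-t)^(η-1)/Real.Gamma η) * φ (((j:ℝ)+t^γ)/(m+1))) - φ z|
      ≤ ε' + A*(2*((j:ℝ)-((m:ℝ)+1)*z)^2/((m:ℝ)+1)^2 + 2/((m:ℝ)+1)^2) := by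
  obtain ⟨hz0, hz1⟩ := hz
  have hΓ : 0 < Real.Gamma η := Real.Gamma_pos_of_pos hη
  have hΓ1 : 0 < Real.Gamma (η+1) := Real.Gamma_pos_of_pos (by linarith)
  have hm1 : (0:ℝ) < (m:ℝ)+1 := by positivity
  set w : ℝ → ℝ := fun t => (1-t)^(η-1)/Real.Gamma η with hw
  set g : ℝ → ℝ := fun t => φ (((j:ℝ)+t^γ)/(m+1)) with hg
  set c : ℝ := φ z with hc
  set B : ℝ := ε' + A*(2*((j:ℝ)-((m:ℝ)+1)*z)^2/((m:ℝ)+1)^2 + 2/((m:ℝ)+1)^2) with hB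
  -- weight facts
  have hwint : IntervalIntegrable w MeasureTheory.volume 0 1 := (weight_intble hη).div_const _
  have hwval : ∫ t in (0:ℝ)..1, w t = 1/(Real.Gamma η * η) := by
    rw [hw]
    rw [intervalIntegral.integral_div, weight_integral hη]
    field_simp
  have hΓw : Real.Gamma (η+1) * ∫ t in (0:ℝ)..1, w t = 1 := by
    rw [hwval, Real.Gamma_add_one (ne_of_gt hη)]
    field_simp
  have hwnn : ∀ t ∈ Set.Icc (0:ℝ) 1, 0 ≤ w t := by
    intro t ht
    have : (0:ℝ) ≤ 1 - t := by linarith [ht.2]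
    rw [hw]
    exact div_nonneg (Real.rpow_nonneg this _) (le_of_lt hΓ)
  -- inner map into Icc
  have hx : ∀ t ∈ Set.Icc (0:ℝ) 1, ((j:ℝ)+t^γ)/(m+1) ∈ Set.Icc (0:ℝ) 1 := by
    intro t ht
    have ht0 := ht.1; have ht1 := ht.2
    have h1 : 0 ≤ t^γ := Real.rpow_nonneg ht0 _
    have h2 : t^γ ≤ 1 := Real.rpow_le_one ht0 ht1 (le_of_lt hγ)
    constructor
    · apply div_nonneg _ (le_of_lt hm1); positivity
    · rw [div_le_one hm1]
      have : (j:ℝ) ≤ m := by exact_mod_cast hj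
      linarith
  -- continuity of g on [0,1]
  have hgc : ContinuousOn g (Set.Icc (0:ℝ) 1) := by
    apply hφ.comp
    · apply ContinuousOn.div_const
      apply ContinuousOn.add continuousOn_const
      intro t ht
      exact (Real.continuousAt_rpow_const t γ (Or.inr hγ.le)).continuousWithinAt
    · intro t ht; exact hx t ht
  -- integrability
  have huIcc : Set.uIcc (0:ℝ) 1 = Set.Icc (0:ℝ) 1 := Set.uIcc_of_le (by norm_num)
  have hwg : IntervalIntegrable (fun t => w t * g t) MeasureTheory.volume 0 1 :=
    hwint.mul_continuousOn (by rwa [huIcc])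
  have hwc : IntervalIntegrable (fun t => w t * c) MeasureTheory.volume 0 1 :=
    hwint.mul_const c
  have hwB : IntervalIntegrable (fun t => w t * B) MeasureTheory.volume 0 1 :=
    hwint.mul_const B
  -- pointwise bound
  have hpt : ∀ t ∈ Set.Icc (0:ℝ) 1, |w t * g t - w t * c| ≤ w t * B := by
    intro t ht
    have hwt := hwnn t ht
    rw [← mul_sub, abs_mul, abs_of_nonneg hwt]
    apply mul_le_mul_of_nonneg_left _ hwt
    have hxt := hx t ht
    have h1 : |g t - c| ≤ ε' + A*((((j:ℝ)+t^γ)/(m+1)) - z)^2 := hK _ hxt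
    have h2 : A*((((j:ℝ)+t^γ)/(m+1)) - z)^2
        ≤ A*(2*((j:ℝ)-((m:ℝ)+1)*z)^2/((m:ℝ)+1)^2 + 2/((m:ℝ)+1)^2) := by
      apply mul_le_mul_of_nonneg_left _ hA
      have hv0 : 0 ≤ t^γ := Real.rpow_nonneg ht.1 _
      have hv1 : t^γ ≤ 1 := Real.rpow_le_one ht.1 ht.2 (le_of_lt hγ)
      have hrw : (((j:ℝ)+t^γ)/(m+1)) - z = (((j:ℝ)-((m:ℝ)+1)*z) + t^γ)/((m:ℝ)+1) := by
        field_simp; ring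
      rw [hrw, div_pow]
      have hkey : (((j:ℝ)-((m:ℝ)+1)*z) + t^γ)^2 ≤ 2*((j:ℝ)-((m:ℝ)+1)*z)^2 + 2 := by
        nlinarith [sq_nonneg (((j:ℝ)-((m:ℝ)+1)*z) - t^γ)]
      have hr2 : 2*((j:ℝ)-((m:ℝ)+1)*z)^2/((m:ℝ)+1)^2 + 2/((m:ℝ)+1)^2
          = (2*((j:ℝ)-((m:ℝ)+1)*z)^2 + 2)/((m:ℝ)+1)^2 := by ring
      rw [hr2]
      gcongr
    calc |g t - c| ≤ ε' + A*((((j:ℝ)+t^γ)/(m+1)) - z)^2 := h1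
      _ ≤ B := by rw [hB]; linarith
  -- main chain
  have heq : Real.Gamma (η+1) * (∫ t in (0:ℝ)..1, w t * g t) - c
      = Real.Gamma (η+1) * ∫ t in (0:ℝ)..1, (w t * g t - w t * c) := by
    rw [intervalIntegral.integral_sub hwg hwc]
    rw [intervalIntegral.integral_mul_const]
    have : Real.Gamma (η+1) * ((∫ t in (0:ℝ)..1, w t * g t) - (∫ t in (0:ℝ)..1, w t) * c)
        = Real.Gamma (η+1) * (∫ t in (0:ℝ)..1, w t * g t)
          - (Real.Gamma (η+1) * ∫ t in (0:ℝ)..1, w t) * c := by ring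
    rw [this, hΓw, one_mul]
  have habs : |∫ t in (0:ℝ)..1, (w t * g t - w t * c)| ≤ B / Real.Gamma (η+1) := by
    have h1 : |∫ t in (0:ℝ)..1, (w t * g t - w t * c)|
        ≤ ∫ t in (0:ℝ)..1, |w t * g t - w t * c| :=
      intervalIntegral.abs_integral_le_integral_abs (by norm_num)
    have h2 : ∫ t in (0:ℝ)..1, |w t * g t - w t * c| ≤ ∫ t in (0:ℝ)..1, w t * B := by
      apply intervalIntegral.integral_mono_on (by norm_num) ((hwg.sub hwc).abs) hwB
      intro t ht; exact hpt t ht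
    have h3 : ∫ t in (0:ℝ)..1, w t * B = B / Real.Gamma (η+1) := by
      rw [intervalIntegral.integral_mul_const]
      have : (∫ t in (0:ℝ)..1, w t) = 1 / Real.Gamma (η+1) := by
        field_simp at hΓw ⊢
        linarith [hΓw]
      rw [this]; ring
    linarith
  calc |Real.Gamma (η+1) * (∫ t in (0:ℝ)..1, w t * g t) - c|
      = Real.Gamma (η+1) * |∫ t in (0:ℝ)..1, (w t * g t - w t * c)| := by
        rw [heq, abs_mul, abs_of_pos hΓ1]
    _ ≤ Real.Gamma (η+1) * (B / Real.Gamma (η+1)) :=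
        mul_le_mul_of_nonneg_left habs (le_of_lt hΓ1)
    _ = B := by field_simp


lemma q_sum_dev (s m : ℕ) (hm : 4*s+4 ≤ m) {α z : ℝ} (hα0 : 0 ≤ α) (hα1 : α ≤ 1)
    (h0 : 0 ≤ z) (h1 : z ≤ 1) :
    |∑ j ∈ range (m+1), qbasis m s α z j - 1| * m
      ≤ (s:ℝ) * (2*(s:ℝ)*2^s*(s.factorial)) := by
  have hsm : s ≤ m := by omega
  rw [q_sum_eq s m hsm α z, add_sub_cancel_left, abs_mul]
  have h1a : |1-α| ≤ 1 := by rw [abs_le]; constructor <;> linarith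
  have hm0 : (0:ℝ) ≤ (m:ℝ) := Nat.cast_nonneg m
  have hsum : |∑ j ∈ range s, (bb m j z - ((m-s).choose j : ℝ) * z^j * (1-z)^(m-s-j+1))| * m
      ≤ (s:ℝ) * (2*(s:ℝ)*2^s*(s.factorial)) := by
    calc |∑ j ∈ range s, (bb m j z - ((m-s).choose j : ℝ) * z^j * (1-z)^(m-s-j+1))| * m
        ≤ (∑ j ∈ range s, |bb m j z - ((m-s).choose j : ℝ) * z^j * (1-z)^(m-s-j+1)|) * m := by
          apply mul_le_mul_of_nonneg_right (Finset.abs_sum_le_sum_abs _ _) hm0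
      _ = ∑ j ∈ range s, |bb m j z - ((m-s).choose j : ℝ) * z^j * (1-z)^(m-s-j+1)| * m :=
          Finset.sum_mul _ _ _
      _ ≤ ∑ j ∈ range s, (2*(s:ℝ)*2^s*(s.factorial)) := by
          apply Finset.sum_le_sum
          intro j hj
          rw [Finset.mem_range] at hj
          exact diff_bound hj hm h0 h1
      _ = (s:ℝ) * (2*(s:ℝ)*2^s*(s.factorial)) := by
          rw [Finset.sum_const, Finset.card_range, nsmul_eq_mul]
  calc |1-α| * |∑ j ∈ range s, (bb m j z - ((m-s).choose j : ℝ) * z^j * (1-z)^(m-s-j+1))| * m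
      = |1-α| * (|∑ j ∈ range s, (bb m j z - ((m-s).choose j : ℝ) * z^j * (1-z)^(m-s-j+1))| * m) := by
        ring
    _ ≤ 1 * ((s:ℝ) * (2*(s:ℝ)*2^s*(s.factorial))) := by
        apply mul_le_mul h1a hsum (by positivity) (by norm_num)
    _ = (s:ℝ) * (2*(s:ℝ)*2^s*(s.factorial)) := one_mul _


set_option maxHeartbeats 2000000 in
theorem stmt8 (s : ℕ) (α η γ : ℝ) (hα0 : 0 ≤ α) (hα1 : α ≤ 1)
    (hη : 0 < η) (hγ : 0 < γ) (φ : ℝ → ℝ) (hφ : ContinuousOn φ (Set.Icc (0:ℝ) 1)) :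
    ∀ ε > 0, ∃ N : ℕ, max s 1 ≤ N ∧
      ∀ m, N ≤ m → ∀ z ∈ Set.Icc (0:ℝ) 1, |Rop m s α η γ φ z - φ z| < ε := by
  intro ε hε
  obtain ⟨M0, hM0⟩ := isCompact_Icc.exists_bound_of_continuousOn hφ
  set M : ℝ := max M0 0 with hMdef
  have hM : ∀ x ∈ Set.Icc (0:ℝ) 1, |φ x| ≤ M := by
    intro x hx
    calc |φ x| = ‖φ x‖ := (Real.norm_eq_abs _).symm
      _ ≤ M0 := hM0 x hx
      _ ≤ M := le_max_left _ _
  have hMnn : 0 ≤ M := le_max_right _ _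
  have huc := isCompact_Icc.uniformContinuousOn_of_continuous hφ
  rw [Metric.uniformContinuousOn_iff] at huc
  obtain ⟨δ, hδ0, hδ⟩ := huc (ε/4) (by linarith)
  set A : ℝ := 2*M/δ^2 with hAdef
  have hA0 : 0 ≤ A := by positivity
  set K : ℝ := (s:ℝ) * (2*(s:ℝ)*2^s*(s.factorial)) with hKdef
  have hK0 : 0 ≤ K := by positivity
  set C : ℝ := 6*((s:ℝ)+1)^2 + 2 with hCdef
  have hs0 : (0:ℝ) ≤ (s:ℝ) := Nat.cast_nonneg s
  have hC2 : 2 ≤ C := by nlinarith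
  set G : ℝ := 2*A*(C+2) + K*M with hGdef
  have hG0 : 0 ≤ G := by
    have : (0:ℝ) ≤ 2*A*(C+2) := by
      apply mul_nonneg (by linarith) (by linarith)
    have : (0:ℝ) ≤ K*M := mul_nonneg hK0 hMnn
    rw [hGdef]; linarith
  obtain ⟨N0, hN0⟩ := exists_nat_gt (max (2*G/ε) K)
  refine ⟨max (max s 1) (max (4*s+4) (N0+1)), le_max_left _ _, ?_⟩
  intro m hm z hz
  obtain ⟨hz0, hz1⟩ := hz
  have h4s : 4*s+4 ≤ m := le_trans (le_trans (le_max_left _ _) (le_max_right _ _)) hm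
  have hN0m : N0+1 ≤ m := le_trans (le_trans (le_max_right _ _) (le_max_right _ _)) hm
  have hsm : s ≤ m := by omega
  have hm1 : 1 ≤ m := by omega
  have hmR : (1:ℝ) ≤ (m:ℝ) := by exact_mod_cast hm1
  have hmpos : (0:ℝ) < (m:ℝ) := by linarith
  have hN0R : max (2*G/ε) K < (N0:ℝ) := hN0
  have hN0mR : (N0:ℝ) + 1 ≤ (m:ℝ) := by exact_mod_cast hN0m
  have hmK : K ≤ (m:ℝ) := by
    have h1 : K < (N0:ℝ) := lt_of_le_of_lt (le_max_right _ _) hN0R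
    linarith
  -- Korovkin pointwise estimate
  have hKor : ∀ x ∈ Set.Icc (0:ℝ) 1, |φ x - φ z| ≤ ε/4 + A*(x-z)^2 := by
    intro x hx
    by_cases hcase : dist x z < δ
    · have h := hδ x hx z ⟨hz0, hz1⟩ hcase
      rw [Real.dist_eq] at h
      have h2 : 0 ≤ A*(x-z)^2 := mul_nonneg hA0 (sq_nonneg _)
      linarith
    · push_neg at hcase
      rw [Real.dist_eq] at hcase
      have h2M : |φ x - φ z| ≤ 2*M := by
        calc |φ x - φ z| ≤ |φ x| + |φ z| := abs_sub _ _
          _ ≤ M + M := add_le_add (hM x hx) (hM z ⟨hz0, hz1⟩)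
          _ = 2*M := by ring
      have hsq : δ^2 ≤ (x-z)^2 := by
        rw [← sq_abs (x-z)]
        exact pow_le_pow_left₀ hδ0.le hcase 2
      have h2 : 2*M ≤ A*(x-z)^2 := by
        calc 2*M = (2*M/δ^2) * δ^2 := by field_simp
          _ ≤ (2*M/δ^2) * (x-z)^2 := by
              apply mul_le_mul_of_nonneg_left hsq (by positivity)
          _ = A*(x-z)^2 := by rw [hAdef]
      linarith
  set e : ℕ → ℝ := fun j => ((j:ℝ) - ((m:ℝ)+1)*z)^2 with he
  set B : ℕ → ℝ := fun j => ε/4 + A*(2*(e j)/((m:ℝ)+1)^2 + 2/((m:ℝ)+1)^2) with hBdef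
  set I : ℕ → ℝ := fun j => ∫ t in (0:ℝ)..1,
    ((1 - t) ^ (η - 1) / Real.Gamma η) * φ (((j : ℝ) + t ^ γ) / (m + 1)) with hIdef
  have hBj : ∀ j ∈ Finset.range (m+1), |Real.Gamma (η+1) * I j - φ z| ≤ B j := by
    intro j hj
    rw [Finset.mem_range] at hj
    exact key_j hη hγ φ hφ (by omega : j ≤ m) ⟨hz0, hz1⟩ hA0 hKor
  set S : ℝ := ∑ j ∈ Finset.range (m+1), qbasis m s α z j with hSdef
  have hq0 : ∀ j, 0 ≤ qbasis m s α z j := qbasis_nonneg hα0 hα1 hz0 hz1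
  have hS0 : 0 ≤ S := Finset.sum_nonneg fun j _ => hq0 j
  have hSdev : |S - 1| * m ≤ K := q_sum_dev s m h4s hα0 hα1 hz0 hz1
  have hSdev' : |S - 1| ≤ K/(m:ℝ) := (le_div_iff₀ hmpos).mpr hSdev
  have hS2 : S ≤ 2 := by
    have h1 : K/(m:ℝ) ≤ 1 := by rw [div_le_one hmpos]; exact hmK
    have h2 := (abs_le.mp hSdev').2
    linarith
  set W : ℝ := ∑ j ∈ Finset.range (m+1), qbasis m s α z j * e j with hWdef
  have hW0 : 0 ≤ W := Finset.sum_nonneg fun j _ => mul_nonneg (hq0 j) (sq_nonneg _)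
  have hW : W ≤ 2*(m:ℝ) + 6*((s:ℝ)+1)^2 := q_moment s m hsm hα0 hα1 hz0 hz1
  have hexp : Rop m s α η γ φ z
      = ∑ j ∈ Finset.range (m+1), qbasis m s α z j * (Real.Gamma (η+1) * I j) := by
    unfold Rop
    rw [Finset.mul_sum]
    apply Finset.sum_congr rfl
    intro j _
    simp only [hIdef]
    ring
  have hsub : ∑ j ∈ Finset.range (m+1), qbasis m s α z j * (Real.Gamma (η+1) * I j - φ z)
      = ∑ j ∈ Finset.range (m+1), qbasis m s α z j * (Real.Gamma (η+1) * I j) - S * φ z := by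
    simp only [mul_sub]
    rw [Finset.sum_sub_distrib, ← Finset.sum_mul, hSdef]
  have hsplit : Rop m s α η γ φ z - φ z
      = (∑ j ∈ Finset.range (m+1), qbasis m s α z j * (Real.Gamma (η+1) * I j - φ z))
        + (S - 1) * φ z := by
    rw [hexp, hsub]; ring
  have habs1 : |∑ j ∈ Finset.range (m+1), qbasis m s α z j * (Real.Gamma (η+1) * I j - φ z)|
      ≤ ∑ j ∈ Finset.range (m+1), qbasis m s α z j * B j := by
    calc |∑ j ∈ Finset.range (m+1), qbasis m s α z j * (Real.Gamma (η+1) * I j - φ z)|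
        ≤ ∑ j ∈ Finset.range (m+1), |qbasis m s α z j * (Real.Gamma (η+1) * I j - φ z)| :=
          Finset.abs_sum_le_sum_abs _ _
      _ ≤ ∑ j ∈ Finset.range (m+1), qbasis m s α z j * B j := by
          apply Finset.sum_le_sum
          intro j hj
          rw [abs_mul, abs_of_nonneg (hq0 j)]
          exact mul_le_mul_of_nonneg_left (hBj j hj) (hq0 j)
  have hsumB : ∑ j ∈ Finset.range (m+1), qbasis m s α z j * B j
      = (ε/4)*S + (2*A/((m:ℝ)+1)^2)*(W + S) := by
    have expand : ∀ j ∈ Finset.range (m+1), qbasis m s α z j * B j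
        = (ε/4)*qbasis m s α z j + (2*A/((m:ℝ)+1)^2)*(qbasis m s α z j * e j)
          + (2*A/((m:ℝ)+1)^2)*qbasis m s α z j := by
      intro j _
      simp only [hBdef]
      ring
    rw [Finset.sum_congr rfl expand, Finset.sum_add_distrib, Finset.sum_add_distrib,
      ← Finset.mul_sum, ← Finset.mul_sum, ← Finset.mul_sum, ← hSdef, ← hWdef]
    ring
  have hT2a : (2*A/((m:ℝ)+1)^2)*(W + S) ≤ (2*A/((m:ℝ)+1)^2)*(2*(m:ℝ) + C) := by
    apply mul_le_mul_of_nonneg_left _ (by positivity)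
    rw [hCdef]; linarith
  have hpoly : (2*(m:ℝ)+C)*(m:ℝ) ≤ (C+2)*((m:ℝ)+1)^2 := by
    nlinarith [mul_nonneg (by linarith : (0:ℝ) ≤ C) (mul_pos hmpos hmpos).le,
      mul_nonneg (by linarith : (0:ℝ) ≤ C) hmpos.le]
  have hT3 : (2*A/((m:ℝ)+1)^2)*(2*(m:ℝ) + C) ≤ 2*A*(C+2)/(m:ℝ) := by
    rw [div_mul_eq_mul_div, div_le_div_iff₀ (by positivity) hmpos]
    have := mul_le_mul_of_nonneg_left hpoly hA0
    nlinarith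
  have hT5 : |S-1| * |φ z| ≤ (K/(m:ℝ))*M :=
    mul_le_mul hSdev' (hM z ⟨hz0, hz1⟩) (abs_nonneg _) (by positivity)
  have hεS : (ε/4)*S ≤ ε/2 := by nlinarith
  have htot : |Rop m s α η γ φ z - φ z| ≤ ε/2 + G/(m:ℝ) := by
    rw [hsplit]
    have c0 := abs_add_le (∑ j ∈ Finset.range (m+1),
      qbasis m s α z j * (Real.Gamma (η+1) * I j - φ z)) ((S - 1) * φ z)
    have c1 : |(S-1) * φ z| = |S-1| * |φ z| := abs_mul _ _
    have c2 : (K/(m:ℝ))*M = K*M/(m:ℝ) := by ring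
    have c3 : G/(m:ℝ) = 2*A*(C+2)/(m:ℝ) + K*M/(m:ℝ) := by rw [hGdef]; ring
    linarith [habs1, hsumB, hT2a, hT3, hT5]
  have hfin : G/(m:ℝ) < ε/2 := by
    rw [div_lt_iff₀ hmpos]
    have h1 : 2*G/ε < (N0:ℝ) := lt_of_le_of_lt (le_max_left _ _) hN0R
    have hmlt : 2*G/ε < (m:ℝ) := by linarith
    rw [div_lt_iff₀ hε] at hmlt
    linarith
  linarith
end
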